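/- arXiv:1402.1096 — 2 statements merged into one kernel-verified Lean document; each statement's English description precedes it below -/
import Mathlib

section
/- Let X be an infinitely divisible random variable with characteristic function exp(iθσ² + ∫₀^{τ²}(e^{iθx} − 1) Π_s(dx)), where Π_s is a finite-moment Lévy measure supported on (0, τ²]. Let Xₙ be uniformly bounded random variables (0 ≤ Xₙ ≤ τ²) with characteristic functions φₙ such that n(φₙ(θ) − 1) → iθσ² + ∫₀^{τ²}(e^{iθx} − 1)Π_s(dx) uniformly on compact sets. Then for each k ≥ 1, n·E[Xₙ^k] converges: to σ² + ∫ x Π_s(dx) when k = 1, and to ∫ x^k Π_s(dx) when k ≥ 2. -/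
/-!
The `k`-th forward difference with step `h` at `0` of `θ ↦ ∫ (e^{iθx} - 1) dμ` is
`∫ (e^{ihx} - 1)^k dμ`, which differs from `(ih)^k ∫ x^k dμ` by at most `k h^{k+1} ∫ x^{k+1} dμ`.
Apply this to `μₙ = n · law(Xₙ)` and to `ν`, whose drift term `iθσ²` contributes `ihσ²` for
`k = 1` and nothing for `k ≥ 2`. Forward differences pass to pointwise limits, and
`n E[Xₙ^{k+1}]` stays bounded since `1 - cos t ≥ 2t²/π²` bounds `n E[Xₙ²]` by `|n(φₙ(1/τ²) - 1)|`.
Dividing by `h^k` and letting `h → 0` gives the limit.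
-/

open MeasureTheory Filter Set Topology Complex
open scoped Real ENNReal fwdDiff

section ForwardDifference

variable {M G : Type*} [AddCommMonoid M]

theorem continuous_fwdDiff [AddCommGroup G] [TopologicalSpace G] [IsTopologicalAddGroup G]
    (h : M) : Continuous (fwdDiff h : (M → G) → M → G) :=
  continuous_pi fun _ => (continuous_apply _).sub (continuous_apply _)

theorem tendsto_fwdDiff_iter [AddCommGroup G] [TopologicalSpace G] [IsTopologicalAddGroup G]
    {ι : Type*} {l : Filter ι} {F : ι → M → G} {f : M → G}
    (hF : ∀ y, Tendsto (fun i => F i y) l (𝓝 (f y))) (h : M) (n : ℕ) (y : M) :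
    Tendsto (fun i => Δ_[h] ^[n] (F i) y) l (𝓝 (Δ_[h] ^[n] f y)) :=
  ((continuous_apply y).tendsto _).comp <|
    (((continuous_fwdDiff h).iterate n).tendsto f).comp (tendsto_pi_nhds.2 hF)

theorem fwdDiff_iter_integral [NormedAddCommGroup G] [NormedSpace ℝ G] {α : Type*}
    [MeasurableSpace α] {μ : Measure α} {g : M → α → G} (hg : ∀ m, Integrable (g m) μ)
    (h : M) (n : ℕ) (y : M) :
    Δ_[h] ^[n] (fun m => ∫ x, g m x ∂μ) y = ∫ x, Δ_[h] ^[n] (fun m => g m x) y ∂μ := by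
  simp only [fwdDiff_iter_eq_sum_shift, ← Int.cast_smul_eq_zsmul ℝ]
  rw [integral_finsetSum]
  · simp only [integral_smul]
  · exact fun k _ => (hg _).smul _

theorem fwdDiff_iter_ofReal_mul (a : ℂ) (h : ℝ) {n : ℕ} (hn : n ≠ 0) :
    Δ_[h] ^[n] (fun θ : ℝ => (θ : ℂ) * a) 0 = if n = 1 then h * a else 0 := by
  obtain ⟨n, rfl⟩ := Nat.exists_eq_succ_of_ne_zero hn
  have hlin : Δ_[h] (fun θ : ℝ => (θ : ℂ) * a) = fun _ => h * a := by
    ext θ; simp only [fwdDiff, ofReal_add]; ring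
  rw [Function.iterate_succ_apply, hlin]
  rcases n with _ | n
  · simp
  · rw [Function.iterate_succ_apply, fwdDiff_const, Function.iterate_fixed (fwdDiff_const h 0)]
    simp

end ForwardDifference

theorem norm_pow_sub_pow_le {R : Type*} [NormedCommRing R] [NormOneClass R] {a b : R} {M : ℝ}
    (ha : ‖a‖ ≤ M) (hb : ‖b‖ ≤ M) (n : ℕ) :
    ‖a ^ n - b ^ n‖ ≤ n * M ^ (n - 1) * ‖a - b‖ := by
  have hM : 0 ≤ M := (norm_nonneg a).trans ha
  rw [← Commute.geom_sum₂_mul (Commute.all a b)]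
  refine (norm_mul_le _ _).trans (mul_le_mul_of_nonneg_right ?_ (norm_nonneg _))
  calc ‖∑ i ∈ Finset.range n, a ^ i * b ^ (n - 1 - i)‖
      ≤ ∑ i ∈ Finset.range n, M ^ (n - 1) := by
        refine (norm_sum_le _ _).trans (Finset.sum_le_sum fun i hi => ?_)
        have hi : i + (n - 1 - i) = n - 1 := by have := Finset.mem_range.1 hi; omega
        calc ‖a ^ i * b ^ (n - 1 - i)‖ ≤ ‖a‖ ^ i * ‖b‖ ^ (n - 1 - i) :=
              (norm_mul_le _ _).trans (mul_le_mul (norm_pow_le _ _) (norm_pow_le _ _)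
                (norm_nonneg _) (by positivity))
          _ ≤ M ^ i * M ^ (n - 1 - i) := by gcongr
          _ = M ^ (n - 1) := by rw [← pow_add, hi]
    _ = n * M ^ (n - 1) := by simp

theorem ofReal_mul_I_mul_ofReal (θ x : ℝ) : (θ : ℂ) * I * x = I * ↑(θ * x) := by
  push_cast; ring

theorem norm_cexp_I_mul_sub_one_pow_sub_le {t : ℝ} (ht : |t| ≤ 1) (n : ℕ) :
    ‖(exp (I * t) - 1) ^ n - (I * t) ^ n‖ ≤ n * |t| ^ (n + 1) := by
  have hIt : ‖I * t‖ = |t| := by simp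
  have h1 : ‖exp (I * t) - 1‖ ≤ |t| := Real.norm_exp_I_mul_ofReal_sub_one_le
  have h2 : ‖exp (I * t) - 1 - I * t‖ ≤ |t| ^ 2 := by
    simpa only [hIt] using norm_exp_sub_one_sub_id_le (hIt.trans_le ht)
  calc ‖(exp (I * t) - 1) ^ n - (I * t) ^ n‖
      ≤ n * |t| ^ (n - 1) * ‖exp (I * t) - 1 - I * t‖ := norm_pow_sub_pow_le h1 hIt.le n
    _ ≤ n * |t| ^ (n - 1) * |t| ^ 2 := by gcongr
    _ = n * |t| ^ (n + 1) := by
        rcases n with _ | n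
        · simp
        · simp only [Nat.add_sub_cancel]; ring

theorem fwdDiff_iter_cexp (x h : ℝ) (n : ℕ) (θ : ℝ) :
    Δ_[h] ^[n] (fun θ : ℝ => exp (θ * I * x)) θ = (exp (h * I * x) - 1) ^ n * exp (θ * I * x) := by
  induction n generalizing θ with
  | zero => simp
  | succ n ih =>
    rw [Function.iterate_succ_apply', fwdDiff, ih, ih, ofReal_add, add_mul, add_mul, exp_add]
    ring

theorem fwdDiff_iter_cexp_sub_one (x h : ℝ) {n : ℕ} (hn : n ≠ 0) (θ : ℝ) :
    Δ_[h] ^[n] (fun θ : ℝ => exp (θ * I * x) - 1) θ =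
      (exp (h * I * x) - 1) ^ n * exp (θ * I * x) := by
  obtain ⟨n, rfl⟩ := Nat.exists_eq_succ_of_ne_zero hn
  have : Δ_[h] (fun θ : ℝ => exp (θ * I * x) - 1) = Δ_[h] fun θ : ℝ => exp (θ * I * x) := by
    ext θ; simp [fwdDiff]
  rw [Function.iterate_succ_apply, this, ← Function.iterate_succ_apply, fwdDiff_iter_cexp]

section IntegralEstimates

variable {μ : Measure ℝ}

theorem integrable_cexp_mul_sub_one (hμ : Integrable (fun x => x) μ) (θ : ℝ) :
    Integrable (fun x : ℝ => exp (θ * I * x) - 1) μ := by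
  refine (hμ.norm.const_mul |θ|).mono' (by fun_prop) (ae_of_all _ fun x => ?_)
  rw [ofReal_mul_I_mul_ofReal, ← Real.norm_eq_abs, ← norm_mul]
  exact Real.norm_exp_I_mul_ofReal_sub_one_le

theorem fwdDiff_iter_integral_cexp_mul_sub_one (hμ : Integrable (fun x => x) μ) (h : ℝ) {n : ℕ}
    (hn : n ≠ 0) :
    Δ_[h] ^[n] (fun θ : ℝ => ∫ x, (exp (θ * I * x) - 1) ∂μ) 0 =
      ∫ x, (exp (h * I * x) - 1) ^ n ∂μ := by
  rw [fwdDiff_iter_integral (integrable_cexp_mul_sub_one hμ)]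
  simp [fwdDiff_iter_cexp_sub_one _ _ hn]

theorem norm_integral_cexp_mul_sub_one_pow_sub_le {h : ℝ} {n : ℕ} (hμ : ∀ᵐ x ∂μ, |h * x| ≤ 1)
    (hn : Integrable (fun x => x ^ n) μ) (hn1 : Integrable (fun x => |x| ^ (n + 1)) μ) :
    ‖∫ x, (exp (h * I * x) - 1) ^ n ∂μ - (h * I) ^ n * ↑(∫ x, x ^ n ∂μ)‖ ≤
      n * |h| ^ (n + 1) * ∫ x, |x| ^ (n + 1) ∂μ := by
  have hexp : Integrable (fun x : ℝ => (exp (h * I * x) - 1) ^ n) μ := by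
    refine (hn.norm.const_mul (|h| ^ n)).mono' (by fun_prop) (ae_of_all _ fun x => ?_)
    rw [norm_pow, norm_pow, ← mul_pow, ofReal_mul_I_mul_ofReal, ← Real.norm_eq_abs, ← norm_mul]
    exact pow_le_pow_left₀ (norm_nonneg _) Real.norm_exp_I_mul_ofReal_sub_one_le n
  have hpow : Integrable (fun x : ℝ => (h * I) ^ n * ((x ^ n : ℝ) : ℂ)) μ :=
    hn.ofReal.const_mul _
  rw [← integral_complex_ofReal, ← integral_const_mul, ← integral_sub hexp hpow,
    ← integral_const_mul]
  refine norm_integral_le_of_norm_le (hn1.const_mul _) (hμ.mono fun x hx => ?_)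
  calc ‖(exp (h * I * x) - 1) ^ n - (h * I) ^ n * ↑(x ^ n)‖
      = ‖(exp (I * ↑(h * x)) - 1) ^ n - (I * ↑(h * x)) ^ n‖ := by
        rw [ofReal_mul_I_mul_ofReal]; push_cast; ring_nf
    _ ≤ n * |h * x| ^ (n + 1) := norm_cexp_I_mul_sub_one_pow_sub_le hx n
    _ = n * |h| ^ (n + 1) * |x| ^ (n + 1) := by rw [abs_mul, mul_pow, mul_assoc]

theorem mul_integral_sq_le {θ : ℝ} (hθ : ∀ᵐ x ∂μ, |θ * x| ≤ π)
    (h2 : Integrable (fun x => x ^ 2) μ) (h1 : Integrable (fun x : ℝ => exp (θ * I * x) - 1) μ) :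
    θ ^ 2 * ∫ x, x ^ 2 ∂μ ≤ π ^ 2 / 2 * ‖∫ x, (exp (θ * I * x) - 1) ∂μ‖ := by
  have hre : ∀ x : ℝ, -(exp (θ * I * x) - 1).re = 1 - Real.cos (θ * x) := by
    intro x
    rw [sub_re, one_re, show (θ : ℂ) * I * x = ↑(θ * x) * I by push_cast; ring,
      exp_ofReal_mul_I_re]
    ring
  calc θ ^ 2 * ∫ x, x ^ 2 ∂μ = π ^ 2 / 2 * ∫ x, 2 / π ^ 2 * (θ * x) ^ 2 ∂μ := by
        simp only [mul_pow, integral_const_mul]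
        field_simp
    _ ≤ π ^ 2 / 2 * ∫ x, -(exp (θ * I * x) - 1).re ∂μ := by
        have hsq : Integrable (fun x => 2 / π ^ 2 * (θ * x) ^ 2) μ :=
          (h2.const_mul (2 / π ^ 2 * θ ^ 2)).congr (ae_of_all _ fun x => by ring)
        refine mul_le_mul_of_nonneg_left (integral_mono_ae hsq h1.re.neg
          (hθ.mono fun x hx => ?_)) (by positivity)
        show _ ≤ -(exp (θ * I * x) - 1).re
        rw [hre]
        linarith [Real.cos_le_one_sub_mul_cos_sq hx]
    _ = π ^ 2 / 2 * -(∫ x, (exp (θ * I * x) - 1) ∂μ).re := by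
        rw [integral_neg, ← RCLike.re_to_complex, ← integral_re h1]
        rfl
    _ ≤ π ^ 2 / 2 * ‖∫ x, (exp (θ * I * x) - 1) ∂μ‖ := by
        gcongr
        exact (neg_le_abs _).trans (abs_re_le_norm _)

end IntegralEstimates

section SupportedOnIcc

variable {μ : Measure ℝ} {c : ℝ}

theorem integrable_of_lintegral_ofReal_min_one_lt_top (hμ : ∀ᵐ x ∂μ, x ∈ Icc 0 c)
    (hlevy : ∫⁻ x, ENNReal.ofReal (min 1 x) ∂μ < ⊤) : Integrable (fun x => x) μ := by
  have hmin : Integrable (fun x : ℝ => min 1 x) μ :=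
    ⟨by fun_prop, (hasFiniteIntegral_iff_ofReal (hμ.mono fun x hx => le_min zero_le_one hx.1)).2
      hlevy⟩
  refine (hmin.const_mul (max 1 c)).mono' (by fun_prop) (hμ.mono fun x hx => ?_)
  rw [Real.norm_eq_abs, abs_of_nonneg hx.1]
  rcases le_total x 1 with hx1 | hx1
  · rw [min_eq_right hx1]
    exact le_mul_of_one_le_left hx.1 (le_max_left 1 c)
  · rw [min_eq_left hx1, mul_one]
    exact hx.2.trans (le_max_right 1 c)

theorem integrable_pow_of_ae_mem_Icc (hμ : ∀ᵐ x ∂μ, x ∈ Icc 0 c)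
    (hint : Integrable (fun x => x) μ) {n : ℕ} (hn : n ≠ 0) : Integrable (fun x => x ^ n) μ := by
  refine (hint.const_mul (c ^ (n - 1))).mono' (by fun_prop) (hμ.mono fun x hx => ?_)
  rw [Real.norm_eq_abs, abs_of_nonneg (pow_nonneg hx.1 n), ← pow_sub_one_mul hn]
  exact mul_le_mul_of_nonneg_right (pow_le_pow_left₀ hx.1 hx.2 _) hx.1

theorem norm_fwdDiff_iter_integral_cexp_mul_sub_one_sub_le (hμ : ∀ᵐ x ∂μ, x ∈ Icc 0 c)
    (hint : Integrable (fun x => x) μ) {h : ℝ} (h0 : 0 < h) (hc : h * c ≤ 1) {n : ℕ} (hn : n ≠ 0) :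
    ‖Δ_[h] ^[n] (fun θ : ℝ => ∫ x, (exp (θ * I * x) - 1) ∂μ) 0 -
        (h * I) ^ n * ↑(∫ x, x ^ n ∂μ)‖ ≤
      n * h ^ (n + 1) * ∫ x, x ^ (n + 1) ∂μ := by
  have habs : ∀ᵐ x ∂μ, |x| ^ (n + 1) = x ^ (n + 1) :=
    hμ.mono fun x hx => by rw [abs_of_nonneg hx.1]
  have hbound := norm_integral_cexp_mul_sub_one_pow_sub_le
    (hμ.mono fun x hx => by
      rw [abs_of_nonneg (mul_nonneg h0.le hx.1)]
      exact (mul_le_mul_of_nonneg_left hx.2 h0.le).trans hc)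
    (integrable_pow_of_ae_mem_Icc hμ hint hn)
    ((integrable_pow_of_ae_mem_Icc hμ hint n.succ_ne_zero).congr (habs.mono fun x hx => hx.symm))
  rwa [abs_of_pos h0, integral_congr_ae habs, ← fwdDiff_iter_integral_cexp_mul_sub_one hint h hn]
    at hbound

theorem norm_fwdDiff_iter_drift_add_integral_sub_le (hμ : ∀ᵐ x ∂μ, x ∈ Icc 0 c)
    (hint : Integrable (fun x => x) μ) (σ2 : ℝ) {h : ℝ} (h0 : 0 < h) (hc : h * c ≤ 1) {n : ℕ}
    (hn : n ≠ 0) :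
    ‖Δ_[h] ^[n] (fun θ : ℝ => θ * I * σ2 + ∫ x, (exp (θ * I * x) - 1) ∂μ) 0 -
        (h * I) ^ n * ↑((if n = 1 then σ2 else 0) + ∫ x, x ^ n ∂μ)‖ ≤
      n * h ^ (n + 1) * ∫ x, x ^ (n + 1) ∂μ := by
  have hsplit : (fun θ : ℝ => θ * I * σ2 + ∫ x, (exp (θ * I * x) - 1) ∂μ) =
      (fun θ : ℝ => (θ : ℂ) * (I * σ2)) + fun θ : ℝ => ∫ x, (exp (θ * I * x) - 1) ∂μ := by
    ext θ; simp [mul_assoc]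
  convert norm_fwdDiff_iter_integral_cexp_mul_sub_one_sub_le hμ hint h0 hc hn using 2
  rw [hsplit, fwdDiff_iter_add, Pi.add_apply, fwdDiff_iter_ofReal_mul _ _ hn]
  split_ifs with h1
  · subst h1; push_cast; ring
  · simp

theorem integral_pow_succ_le (hμ : ∀ᵐ x ∂μ, x ∈ Icc 0 c)
    (hint : Integrable (fun x => x) μ) (hc : 0 < c) {n : ℕ} (hn : n ≠ 0) :
    ∫ x, x ^ (n + 1) ∂μ ≤ c ^ (n + 1) * (π ^ 2 / 2) * ‖∫ x, (exp (c⁻¹ * I * x) - 1) ∂μ‖ := by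
  have h2 := integrable_pow_of_ae_mem_Icc hμ hint two_ne_zero
  calc ∫ x, x ^ (n + 1) ∂μ ≤ ∫ x, c ^ (n - 1) * x ^ 2 ∂μ := by
        refine integral_mono_ae (integrable_pow_of_ae_mem_Icc hμ hint n.succ_ne_zero)
          (h2.const_mul _) (hμ.mono fun x hx => ?_)
        dsimp only
        rw [show n + 1 = n - 1 + 2 by omega, pow_add]
        exact mul_le_mul_of_nonneg_right (pow_le_pow_left₀ hx.1 hx.2 _) (sq_nonneg x)
    _ = c ^ (n + 1) * (c⁻¹ ^ 2 * ∫ x, x ^ 2 ∂μ) := by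
        rw [integral_const_mul, show n + 1 = n - 1 + 2 by omega, pow_add]
        field_simp
    _ ≤ c ^ (n + 1) * (π ^ 2 / 2 * ‖∫ x, (exp (c⁻¹ * I * x) - 1) ∂μ‖) := by
        refine mul_le_mul_of_nonneg_left (mul_integral_sq_le (hμ.mono fun x hx => ?_) h2
          (integrable_cexp_mul_sub_one hint _)) (by positivity)
        rw [abs_of_nonneg (by have := hx.1; positivity), inv_mul_le_iff₀ hc]
        nlinarith [Real.pi_gt_three, hx.1, hx.2]
    _ = c ^ (n + 1) * (π ^ 2 / 2) * ‖∫ x, (exp (c⁻¹ * I * x) - 1) ∂μ‖ := by ring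

end SupportedOnIcc

theorem tendsto_of_eventually_approx {ι α : Type*} [PseudoMetricSpace α] {l : Filter ι}
    {a : ι → α} {L : α} (C : ℝ)
    (happrox : ∀ᶠ r in 𝓝[>] (0 : ℝ), ∃ b : ι → α, ∃ β, Tendsto b l (𝓝 β) ∧
      (∀ᶠ i in l, dist (a i) (b i) ≤ C * r) ∧ dist L β ≤ C * r) :
    Tendsto a l (𝓝 L) := by
  refine Metric.tendsto_nhds.2 fun ε hε => ?_
  have hsmall : ∀ᶠ r in 𝓝[>] (0 : ℝ), C * r < ε / 3 :=
    tendsto_nhdsWithin_of_tendsto_nhds ((continuous_const_mul C).tendsto' 0 0 (mul_zero C))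
      |>.eventually (gt_mem_nhds (by positivity))
  obtain ⟨r, ⟨b, β, hb, hab, hLβ⟩, hr⟩ := (happrox.and hsmall).exists
  filter_upwards [hab, Metric.tendsto_nhds.1 hb (ε / 3) (by positivity)] with i hai hbi
  calc dist (a i) L ≤ dist (a i) (b i) + dist (b i) β + dist L β := by
        rw [dist_comm L]; exact dist_triangle4 _ _ _ _
    _ < ε := by linarith

theorem dist_div_le_of_norm_sub_mul_le {𝕜 : Type*} [NormedField 𝕜] {a b w : 𝕜} {e : ℝ}
    (hw : w ≠ 0) (h : ‖b - w * a‖ ≤ ‖w‖ * e) : dist a (b / w) ≤ e := by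
  rw [dist_eq_norm, ← mul_le_mul_iff_of_pos_left (norm_pos_iff.2 hw), ← norm_mul, mul_sub,
    mul_div_cancel₀ _ hw, norm_sub_rev]
  exact h

theorem tendsto_integral_pow_of_tendsto_integral_cexp_mul_sub_one {μ : ℕ → Measure ℝ}
    {ν : Measure ℝ} {c σ2 : ℝ} (hc : 0 < c) (hμ : ∀ n, ∀ᵐ x ∂μ n, x ∈ Icc 0 c)
    (hμint : ∀ n, Integrable (fun x => x) (μ n)) (hν : ∀ᵐ x ∂ν, x ∈ Icc 0 c)
    (hνint : Integrable (fun x => x) ν)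
    (hconv : ∀ θ : ℝ, Tendsto (fun n => ∫ x, (exp (θ * I * x) - 1) ∂μ n) atTop
      (𝓝 (θ * I * σ2 + ∫ x, (exp (θ * I * x) - 1) ∂ν)))
    {k : ℕ} (hk : k ≠ 0) :
    Tendsto (fun n => ∫ x, x ^ k ∂μ n) atTop
      (𝓝 ((if k = 1 then σ2 else 0) + ∫ x, x ^ k ∂ν)) := by
  set ψ : ℝ → ℂ := fun θ => θ * I * σ2 + ∫ x, (exp (θ * I * x) - 1) ∂ν
  set B := c ^ (k + 1) * (π ^ 2 / 2) * (‖ψ c⁻¹‖ + 1)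
  have hB : ∀ᶠ n in atTop, ∫ x, x ^ (k + 1) ∂μ n ≤ B :=
    ((hconv c⁻¹).norm.eventually (gt_mem_nhds (lt_add_one _))).mono fun n hn =>
      (integral_pow_succ_le (hμ n) (hμint n) hc hk).trans
        (mul_le_mul_of_nonneg_left hn.le (by positivity))
  have hB0 : 0 ≤ B := by positivity
  have hν0 : 0 ≤ ∫ x, x ^ (k + 1) ∂ν :=
    integral_nonneg_of_ae (hν.mono fun x hx => pow_nonneg hx.1 _)
  rw [← tendsto_ofReal_iff]
  refine tendsto_of_eventually_approx (k * (B + ∫ x, x ^ (k + 1) ∂ν)) ?_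
  filter_upwards [Ioc_mem_nhdsGT (inv_pos.2 hc)] with h ⟨h0, hh⟩
  have hhc : h * c ≤ 1 := (mul_le_mul_of_nonneg_right hh hc.le).trans_eq (inv_mul_cancel₀ hc.ne')
  have hI : (h * I : ℂ) ^ k ≠ 0 := by simp [h0.ne']
  have hscale : ∀ X ≤ B + ∫ x, x ^ (k + 1) ∂ν,
      k * h ^ (k + 1) * X ≤ ‖(h * I : ℂ) ^ k‖ * (k * (B + ∫ x, x ^ (k + 1) ∂ν) * h) := by
    intro X hX
    rw [norm_pow, norm_mul, norm_real, norm_I, mul_one, Real.norm_of_nonneg h0.le]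
    calc k * h ^ (k + 1) * X ≤ k * h ^ (k + 1) * (B + ∫ x, x ^ (k + 1) ∂ν) := by gcongr
      _ = _ := by ring
  refine ⟨fun n => Δ_[h] ^[k] (fun θ : ℝ => ∫ x, (exp (θ * I * x) - 1) ∂μ n) 0 / (h * I) ^ k,
    Δ_[h] ^[k] ψ 0 / (h * I) ^ k, (tendsto_fwdDiff_iter hconv h k 0).div_const _, ?_, ?_⟩
  · filter_upwards [hB] with n hn
    refine dist_div_le_of_norm_sub_mul_le hI ?_
    exact (norm_fwdDiff_iter_integral_cexp_mul_sub_one_sub_le (hμ n) (hμint n) h0 hhc hk).trans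
      (hscale _ (by linarith))
  · refine dist_div_le_of_norm_sub_mul_le hI ?_
    exact (norm_fwdDiff_iter_drift_add_integral_sub_le hν hνint σ2 h0 hhc hk).trans
      (hscale _ (by linarith))

theorem char_function_expansion_moments_general {Ω : Type*} [MeasurableSpace Ω] (P : Measure Ω)
    [IsProbabilityMeasure P] (X : ℕ → Ω → ℝ) (hmeas : ∀ n, Measurable (X n))
    (τ : ℝ) (hτ : 0 < τ) (hbd : ∀ n ω, X n ω ∈ Set.Icc 0 (τ ^ 2))
    (σ2 : ℝ) (ν : Measure ℝ)
    (hsupp : ν (Set.Ioc 0 (τ ^ 2))ᶜ = 0)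
    (hlevy : ∫⁻ x, ENNReal.ofReal (min 1 x) ∂ν < ⊤)
    (φ : ℕ → ℝ → ℂ) (hφ : ∀ n θ, φ n θ = ∫ ω, Complex.exp ((θ : ℂ) * Complex.I * (X n ω : ℂ)) ∂P)
    (hconv : ∀ K : Set ℝ, IsCompact K →
      TendstoUniformlyOn (fun (n : ℕ) (θ : ℝ) => (n : ℂ) * (φ n θ - 1))
        (fun θ : ℝ => (θ : ℂ) * Complex.I * (σ2 : ℂ) +
          ∫ x, (Complex.exp ((θ : ℂ) * Complex.I * (x : ℂ)) - 1) ∂ν)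
        atTop K) :
    ∀ k : ℕ, 1 ≤ k →
      Tendsto (fun n : ℕ => (n : ℝ) * ∫ ω, (X n ω) ^ k ∂P) atTop
        (nhds (if k = 1 then σ2 + ∫ x, x ∂ν else ∫ x, x ^ k ∂ν)) := by
  intro k hk
  have hlaw : ∀ n, ∀ᵐ x ∂P.map (X n), x ∈ Icc 0 (τ ^ 2) := fun n =>
    (ae_map_iff (hmeas n).aemeasurable measurableSet_Icc).2 (ae_of_all _ (hbd n))
  have hν : ∀ᵐ x ∂ν, x ∈ Icc 0 (τ ^ 2) :=
    mem_of_superset (mem_ae_iff.2 hsupp) Ioc_subset_Icc_self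
  have hmoment := tendsto_integral_pow_of_tendsto_integral_cexp_mul_sub_one
    (μ := fun n => (n : ℝ≥0∞) • P.map (X n)) (σ2 := σ2) (by positivity)
    (fun n => Measure.ae_smul_measure (hlaw n) _)
    (fun n => (Integrable.of_bound (by fun_prop) (τ ^ 2) ((hlaw n).mono fun x hx => by
      rw [Real.norm_of_nonneg hx.1]; exact hx.2)).smul_measure (ENNReal.natCast_ne_top n))
    hν (integrable_of_lintegral_ofReal_min_one_lt_top hν hlevy) (fun θ => ?_) (by omega : k ≠ 0)
  · simp only [integral_smul_measure, integral_map (hmeas _).aemeasurable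
      (by fun_prop : AEStronglyMeasurable (fun x : ℝ => x ^ k) _), ENNReal.toReal_natCast,
      smul_eq_mul] at hmoment
    convert hmoment using 2
    split_ifs <;> simp_all
  · refine ((hconv {θ} isCompact_singleton).tendsto_at rfl).congr fun n => ?_
    have hexp : Integrable (fun ω => exp (θ * I * X n ω)) P :=
      Integrable.of_bound (by fun_prop) 1 (ae_of_all _ fun ω => by
        rw [ofReal_mul_I_mul_ofReal, norm_exp_I_mul_ofReal])
    rw [hφ, integral_smul_measure, integral_map (hmeas n).aemeasurable (by fun_prop),
      integral_sub hexp (integrable_const 1)]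
    simp

/-- If `Xₙ` are uniformly bounded nonnegative random variables whose scaled characteristic
function differences `n(φₙ(θ) - 1)` converge uniformly on compacts to
`iθσ² + ∫ (e^{iθx} - 1) dν` for a finite-moment Lévy measure `ν` supported in `(0, τ²]`,
then `n E[Xₙ^k]` converges to `σ² + ∫ x dν` for `k = 1` and to `∫ x^k dν` for `k ≥ 2`. -/
theorem char_function_expansion_moments {Ω : Type*} [MeasurableSpace Ω] (P : Measure Ω)
    [IsProbabilityMeasure P] (X : ℕ → Ω → ℝ) (hmeas : ∀ n, Measurable (X n))
    (τ : ℝ) (hτ : 0 < τ) (hbd : ∀ n ω, X n ω ∈ Set.Icc 0 (τ ^ 2))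
    (σ2 : ℝ) (hσ2 : 0 ≤ σ2) (ν : Measure ℝ)
    (hsupp : ν (Set.Ioc 0 (τ ^ 2))ᶜ = 0)
    (hlevy : ∫⁻ x, ENNReal.ofReal (min 1 x) ∂ν < ⊤)
    (φ : ℕ → ℝ → ℂ) (hφ : ∀ n θ, φ n θ = ∫ ω, Complex.exp ((θ : ℂ) * Complex.I * (X n ω : ℂ)) ∂P)
    (hconv : ∀ K : Set ℝ, IsCompact K →
      TendstoUniformlyOn (fun (n : ℕ) (θ : ℝ) => (n : ℂ) * (φ n θ - 1))
        (fun θ : ℝ => (θ : ℂ) * Complex.I * (σ2 : ℂ) +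
          ∫ x, (Complex.exp ((θ : ℂ) * Complex.I * (x : ℂ)) - 1) ∂ν)
        atTop K) :
    ∀ k : ℕ, 1 ≤ k →
      Tendsto (fun n : ℕ => (n : ℝ) * ∫ ω, (X n ω) ^ k ∂P) atTop
        (nhds (if k = 1 then σ2 + ∫ x, x ∂ν else ∫ x, x ^ k ∂ν)) :=
  char_function_expansion_moments_general P X hmeas τ hτ hbd σ2 ν hsupp hlevy φ hφ hconv
end

section
/- Let C be the adjacency operator of the graph ℕ rooted at 1 with every edge {k, k+1} having weight σ > 0, i.e. C e_k = σ e_{k−1} + σ e_{k+1} (with e_0 := 0), acting as a self-adjoint operator on ℓ²(ℕ). Then the spectral measure of C at the vector e_1 is the semicircle law with density (2πσ²)^{−1}√(4σ² − x²) on [−2σ, 2σ]. -/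
/-!
Both `⟨e₀, C ^ k e₀⟩` and the `k`-th moment of the semicircle law equal `σ ^ k` times the number
of `±1` walks of length `k` on `ℕ` from `0` back to `0`. On the operator side, self-adjointness
moves `C` onto `e_j`, and `C e_j = σ e_{j-1} + σ e_{j+1}` turns `⟨e_j, C ^ k e₀⟩` into the walk
recursion. On the semicircle side, `x = 2σ cos θ` and the Chebyshev functions
`U_j (cos θ) sin θ = sin ((j + 1) θ)` satisfy the same recursion, and their orthogonality on
`[0, π]` gives the initial values. Walks are at most `2 ^ k` in number, so Markov's inequality
confines `μ` to `[-2σ, 2σ]`, and two finite measures on a compact interval with the same moments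
coincide by Weierstrass approximation.
-/

open MeasureTheory ComplexInnerProductSpace Real Set Filter Topology Polynomial

theorem measure_le_abs_eq_zero_of_integral_pow_le {μ : Measure ℝ} [IsFiniteMeasure μ] {c R r : ℝ}
    (hR : 0 ≤ R) (hr : R < r) (hint : ∀ n : ℕ, Integrable (fun x => x ^ (2 * n)) μ)
    (hbound : ∀ n : ℕ, ∫ x, x ^ (2 * n) ∂μ ≤ c * R ^ (2 * n)) :
    μ {x | r ≤ |x|} = 0 := by
  have hr0 : 0 < r := hR.trans_lt hr
  have hmarkov : ∀ n : ℕ, μ.real {x | r ≤ |x|} ≤ c * ((R / r) ^ 2) ^ n := by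
    intro n
    have hsub : {x : ℝ | r ≤ |x|} ⊆ {x | r ^ (2 * n) ≤ x ^ (2 * n)} := fun x (hx : r ≤ |x|) =>
      show r ^ (2 * n) ≤ x ^ (2 * n) from
        (even_two_mul n).pow_abs x ▸ pow_le_pow_left₀ hr0.le hx (2 * n)
    have := (mul_le_mul_of_nonneg_left (measureReal_mono hsub) (by positivity)).trans
      ((mul_meas_ge_le_integral_of_nonneg
        (ae_of_all _ fun x => (even_two_mul n).pow_nonneg x) (hint n) _).trans (hbound n))
    rw [← le_div_iff₀' (by positivity)] at this
    rwa [← pow_mul, div_pow, ← mul_div_assoc]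
  have hlim : Tendsto (fun n : ℕ => c * ((R / r) ^ 2) ^ n) atTop (𝓝 0) := by
    simpa using (tendsto_pow_atTop_nhds_zero_of_lt_one (by positivity)
      (pow_lt_one₀ (by positivity) ((div_lt_one hr0).2 hr) two_ne_zero)).const_mul c
  exact (measureReal_eq_zero_iff).1 (le_antisymm (ge_of_tendsto' hlim hmarkov) measureReal_nonneg)

theorem ae_mem_Icc_of_integral_pow_le {μ : Measure ℝ} [IsFiniteMeasure μ] {c R : ℝ} (hR : 0 ≤ R)
    (hint : ∀ n : ℕ, Integrable (fun x => x ^ (2 * n)) μ)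
    (hbound : ∀ n : ℕ, ∫ x, x ^ (2 * n) ∂μ ≤ c * R ^ (2 * n)) :
    ∀ᵐ x ∂μ, x ∈ Icc (-R) R := by
  have hall : ∀ᵐ x ∂μ, ∀ n : ℕ, |x| < R + 1 / (n + 1) := ae_all_iff.2 fun n =>
    (measure_eq_zero_iff_ae_notMem.1 (measure_le_abs_eq_zero_of_integral_pow_le hR
      (lt_add_of_pos_right R Nat.one_div_pos_of_nat) hint hbound)).mono fun x hx => not_le.1 hx
  filter_upwards [hall] with x hx
  refine abs_le.1 (le_of_forall_pos_lt_add fun ε hε => ?_)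
  obtain ⟨n, hn⟩ := exists_nat_one_div_lt hε
  linarith [hx n]

theorem integral_eval_eq_of_integral_pow_eq {μ ν : Measure ℝ}
    (hμ : ∀ k : ℕ, Integrable (fun x => x ^ k) μ) (hν : ∀ k : ℕ, Integrable (fun x => x ^ k) ν)
    (h : ∀ k : ℕ, ∫ x, x ^ k ∂μ = ∫ x, x ^ k ∂ν) (p : ℝ[X]) :
    ∫ x, p.eval x ∂μ = ∫ x, p.eval x ∂ν := by
  simp_rw [eval_eq_sum_range]
  rw [integral_finsetSum _ fun i _ => (hμ i).const_mul _,
    integral_finsetSum _ fun i _ => (hν i).const_mul _]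
  simp_rw [integral_const_mul, h]

theorem Continuous.integrable_of_ae_mem {X E : Type*} [TopologicalSpace X] [T2Space X]
    [MeasurableSpace X] [OpensMeasurableSpace X] [NormedAddCommGroup E] {μ : Measure X}
    [IsFiniteMeasure μ] {K : Set X} (hK : IsCompact K) {f : X → E} (hf : Continuous f)
    (hμ : ∀ᵐ x ∂μ, x ∈ K) : Integrable f μ := by
  rw [← Measure.restrict_eq_self_of_ae_mem hμ]
  exact hf.continuousOn.integrableOn_compact hK

theorem dist_integral_le_of_ae_mem {X : Type*} [MeasurableSpace X] {μ : Measure X}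
    [IsFiniteMeasure μ] {s : Set X} (hμ : ∀ᵐ x ∂μ, x ∈ s) {f g : X → ℝ} (hf : Integrable f μ)
    (hg : Integrable g μ) {ε : ℝ} (hfg : ∀ x ∈ s, dist (f x) (g x) ≤ ε) :
    dist (∫ x, f x ∂μ) (∫ x, g x ∂μ) ≤ ε * μ.real univ := by
  rw [dist_eq_norm, ← integral_sub hf hg]
  exact norm_integral_le_of_norm_le_const (hμ.mono fun x hx => dist_eq_norm (f x) (g x) ▸ hfg x hx)

theorem ext_of_integral_pow_eq_of_ae_mem_Icc {μ ν : Measure ℝ} [IsFiniteMeasure μ]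
    [IsFiniteMeasure ν] {a b : ℝ} (hμ : ∀ᵐ x ∂μ, x ∈ Icc a b) (hν : ∀ᵐ x ∂ν, x ∈ Icc a b)
    (h : ∀ k : ℕ, ∫ x, x ^ k ∂μ = ∫ x, x ^ k ∂ν) : μ = ν := by
  have integrable {ρ : Measure ℝ} [IsFiniteMeasure ρ] (hρ : ∀ᵐ x ∂ρ, x ∈ Icc a b) {f : ℝ → ℝ}
      (hf : Continuous f) : Integrable f ρ :=
    hf.integrable_of_ae_mem isCompact_Icc hρ
  refine ext_of_forall_integral_eq_of_IsFiniteMeasure fun f => eq_of_forall_dist_le fun ε hε => ?_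
  set M := μ.real univ + ν.real univ + 1
  obtain ⟨p, hp⟩ := exists_polynomial_near_of_continuousOn a b f f.continuous.continuousOn
    (ε / M) (by positivity)
  have hpf : ∀ x ∈ Icc a b, dist (f x) (p.eval x) ≤ ε / M := fun x hx => by
    rw [dist_comm, Real.dist_eq]; exact (hp x hx).le
  have hpoly := integral_eval_eq_of_integral_pow_eq (fun k => integrable hμ (continuous_pow k))
    (fun k => integrable hν (continuous_pow k)) h p
  calc dist (∫ x, f x ∂μ) (∫ x, f x ∂ν)
      ≤ dist (∫ x, f x ∂μ) (∫ x, p.eval x ∂μ) + dist (∫ x, f x ∂ν) (∫ x, p.eval x ∂ν) := by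
        rw [hpoly, dist_comm (∫ x, f x ∂ν)]; exact dist_triangle _ _ _
    _ ≤ ε / M * μ.real univ + ε / M * ν.real univ :=
        add_le_add
          (dist_integral_le_of_ae_mem hμ (integrable hμ f.continuous) (integrable hμ p.continuous)
            hpf)
          (dist_integral_le_of_ae_mem hν (integrable hν f.continuous) (integrable hν p.continuous)
            hpf)
    _ ≤ ε := by
        rw [← mul_add, div_mul_eq_mul_div, div_le_iff₀ (by positivity)]
        exact mul_le_mul_of_nonneg_left (by linarith) hε.le

theorem integral_cos_nat_mul (n : ℕ) : ∫ θ in (0 : ℝ)..π, cos (n * θ) = if n = 0 then π else 0 := by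
  split_ifs with hn
  · simp [hn]
  · have hn' : (n : ℝ) ≠ 0 := Nat.cast_ne_zero.2 hn
    rw [intervalIntegral.integral_comp_mul_left (fun θ => cos θ) hn', integral_cos, sin_nat_mul_pi]
    simp

theorem integral_sin_succ_mul_mul_sin (j : ℕ) :
    ∫ θ in (0 : ℝ)..π, sin ((j + 1 : ℕ) * θ) * sin θ = if j = 0 then π / 2 else 0 := by
  have h : ∀ θ : ℝ, sin ((j + 1 : ℕ) * θ) * sin θ = (cos (j * θ) - cos ((j + 2 : ℕ) * θ)) / 2 := by
    intro θ
    have := two_mul_sin_mul_sin ((j + 1) * θ) θ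
    push_cast
    rw [show (j : ℝ) * θ = (j + 1) * θ - θ by ring,
      show ((j : ℝ) + 2) * θ = (j + 1) * θ + θ by ring]
    linarith
  simp_rw [h]
  rw [intervalIntegral.integral_div, intervalIntegral.integral_sub, integral_cos_nat_mul,
    integral_cos_nat_mul]
  · split_ifs <;> simp_all
  all_goals exact (by fun_prop : Continuous _).intervalIntegrable _ _

theorem integral_two_mul_cos_pow_succ_mul_sin_mul_sin (σ : ℝ) (k n : ℕ) :
    ∫ θ in (0 : ℝ)..π, (2 * σ * cos θ) ^ (k + 1) * sin ((n + 1 : ℕ) * θ) * sin θ =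
      σ * ((∫ θ in (0 : ℝ)..π, (2 * σ * cos θ) ^ k * sin (n * θ) * sin θ) +
        ∫ θ in (0 : ℝ)..π, (2 * σ * cos θ) ^ k * sin ((n + 2 : ℕ) * θ) * sin θ) := by
  rw [← intervalIntegral.integral_add, ← intervalIntegral.integral_const_mul]
  · refine intervalIntegral.integral_congr fun θ _ => ?_
    have := two_mul_sin_mul_cos ((n + 1) * θ) θ
    push_cast
    rw [show (n : ℝ) * θ = (n + 1) * θ - θ by ring,
      show ((n : ℝ) + 2) * θ = (n + 1) * θ + θ by ring, pow_succ]
    linear_combination (2 * σ * cos θ) ^ k * sin θ * σ * this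
  all_goals exact (by fun_prop : Continuous _).intervalIntegrable _ _

/-- The number of walks of length `k` with steps `±1` on `ℕ` from `j` to `0`. -/
def halfLinePaths : ℕ → ℕ → ℕ
  | 0, 0 => 1
  | 0, _ + 1 => 0
  | k + 1, 0 => halfLinePaths k 1
  | k + 1, j + 1 => halfLinePaths k j + halfLinePaths k (j + 2)

theorem halfLinePaths_le_two_pow (k j : ℕ) : halfLinePaths k j ≤ 2 ^ k := by
  induction k generalizing j with
  | zero => cases j <;> simp [halfLinePaths]
  | succ k ih =>
    cases j with
    | zero => exact (ih 1).trans (Nat.pow_le_pow_right two_pos k.le_succ)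
    | succ j => rw [halfLinePaths, pow_succ]; linarith [ih j, ih (j + 2)]

theorem pow_mul_halfLinePaths_le {σ : ℝ} (hσ : 0 ≤ σ) (k j : ℕ) :
    σ ^ k * halfLinePaths k j ≤ (2 * σ) ^ k := by
  rw [mul_pow, mul_comm (2 ^ k)]
  gcongr
  exact_mod_cast halfLinePaths_le_two_pow k j

theorem eq_pow_mul_halfLinePaths {R : Type*} [CommSemiring R] {σ : R} {c : ℕ → ℕ → R}
    (h_zero : ∀ j, c 0 j = if j = 0 then 1 else 0)
    (h_succ_zero : ∀ k, c (k + 1) 0 = σ * c k 1)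
    (h_succ_succ : ∀ k j, c (k + 1) (j + 1) = σ * (c k j + c k (j + 2))) (k j : ℕ) :
    c k j = σ ^ k * halfLinePaths k j := by
  induction k generalizing j with
  | zero => cases j <;> simp [h_zero, halfLinePaths]
  | succ k ih =>
    cases j with
    | zero => rw [h_succ_zero, ih, halfLinePaths, pow_succ']; ring
    | succ j => rw [h_succ_succ, ih, ih, halfLinePaths, pow_succ']; push_cast; ring

theorem lp.inner_single_one_single_one {ι 𝕜 : Type*} [RCLike 𝕜] [DecidableEq ι] (i j : ι) :
    inner 𝕜 (lp.single (E := fun _ : ι => 𝕜) 2 i (1 : 𝕜)) (lp.single 2 j (1 : 𝕜)) =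
      if i = j then 1 else 0 := by
  rw [lp.inner_single_left, lp.single_apply]
  split_ifs with h <;> simp [h]

theorem inner_single_pow_apply_single {σ : ℝ}
    {C : lp (fun _ : ℕ => ℂ) 2 →L[ℂ] lp (fun _ : ℕ => ℂ) 2} (hsa : IsSelfAdjoint C)
    (h0 : C (lp.single 2 0 (1 : ℂ)) = (σ : ℂ) • lp.single 2 1 (1 : ℂ))
    (hk : ∀ k : ℕ, C (lp.single 2 (k + 1) (1 : ℂ)) =
      (σ : ℂ) • lp.single 2 k (1 : ℂ) + (σ : ℂ) • lp.single 2 (k + 2) (1 : ℂ)) (k j : ℕ) :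
    ⟪lp.single 2 j (1 : ℂ), (C ^ k) (lp.single 2 0 (1 : ℂ))⟫ = (σ : ℂ) ^ k * halfLinePaths k j := by
  have h_succ : ∀ k j, ⟪lp.single 2 j (1 : ℂ), (C ^ (k + 1)) (lp.single 2 0 (1 : ℂ))⟫ =
      ⟪C (lp.single 2 j (1 : ℂ)), (C ^ k) (lp.single 2 0 (1 : ℂ))⟫ := fun k j => by
    rw [pow_succ']; exact (hsa.isSymmetric _ _).symm
  refine eq_pow_mul_halfLinePaths
    (c := fun k j => ⟪lp.single 2 j (1 : ℂ), (C ^ k) (lp.single 2 0 (1 : ℂ))⟫)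
    (fun j => ?_) (fun k => ?_) (fun k j => ?_) k j
  · simp only [pow_zero, one_apply_eq_self, lp.inner_single_one_single_one]
  · rw [h_succ, h0, inner_smul_left, Complex.conj_ofReal]
  · rw [h_succ, hk, inner_add_left, inner_smul_left, inner_smul_left, Complex.conj_ofReal, mul_add]

noncomputable def semicircleDensity (σ x : ℝ) : ℝ := (2 * π * σ ^ 2)⁻¹ * √(4 * σ ^ 2 - x ^ 2)

noncomputable def semicircle (σ : ℝ) : Measure ℝ :=
  volume.withDensity fun x => ENNReal.ofReal (semicircleDensity σ x)

section Semicircle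

variable {σ : ℝ}

theorem continuous_semicircleDensity : Continuous (semicircleDensity σ) := by
  unfold semicircleDensity; fun_prop

theorem semicircleDensity_nonneg (x : ℝ) : 0 ≤ semicircleDensity σ x := by
  unfold semicircleDensity; positivity

theorem semicircleDensity_eq_zero (hσ : 0 ≤ σ) {x : ℝ} (hx : x ∉ Ioo (-(2 * σ)) (2 * σ)) :
    semicircleDensity σ x = 0 := by
  have : 4 * σ ^ 2 ≤ x ^ 2 := by
    rw [mem_Ioo, not_and_or, not_lt, not_lt] at hx
    rcases hx with hx | hx <;> nlinarith
  rw [semicircleDensity, sqrt_eq_zero'.2 (by linarith), mul_zero]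

theorem semicircleDensity_two_mul_cos_mul (hσ : 0 < σ) {θ : ℝ} (hθ : θ ∈ Icc 0 π) :
    semicircleDensity σ (2 * σ * cos θ) * (2 * σ * sin θ) = 2 / π * sin θ ^ 2 := by
  have hsin : 0 ≤ sin θ := sin_nonneg_of_nonneg_of_le_pi hθ.1 hθ.2
  have hsqrt : √(4 * σ ^ 2 - (2 * σ * cos θ) ^ 2) = 2 * σ * sin θ := by
    rw [← sqrt_sq (by positivity : 0 ≤ 2 * σ * sin θ)]
    congr 1
    linear_combination (-4 * σ ^ 2) * sin_sq_add_cos_sq θ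
  rw [semicircleDensity, hsqrt]
  field_simp

theorem integral_semicircle (hσ : 0 < σ) {f : ℝ → ℝ} (hf : Continuous f) :
    ∫ x, f x ∂semicircle σ = 2 / π * ∫ θ in (0 : ℝ)..π, f (2 * σ * cos θ) * sin θ ^ 2 := by
  have hsupp : Function.support (fun x => semicircleDensity σ x * f x) ⊆ Ioc (-(2 * σ)) (2 * σ) :=
    fun x hx => by
      by_contra hmem
      exact hx (by
        simp only [semicircleDensity_eq_zero hσ.le fun h => hmem ⟨h.1, h.2.le⟩, zero_mul])
  have hderiv : ∀ θ ∈ uIcc π 0, HasDerivAt (fun θ => 2 * σ * cos θ) (2 * σ * -sin θ) θ :=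
    fun θ _ => (hasDerivAt_cos θ).const_mul (2 * σ)
  have hsubst := intervalIntegral.integral_comp_mul_deriv hderiv (by fun_prop)
    ((continuous_semicircleDensity (σ := σ)).mul hf)
  simp only [Function.comp_apply, Pi.mul_apply, cos_pi, cos_zero, mul_neg, mul_one] at hsubst
  calc ∫ x, f x ∂semicircle σ = ∫ x, semicircleDensity σ x * f x := by
        rw [semicircle, integral_withDensity_eq_integral_toReal_smul
          (continuous_semicircleDensity.measurable.ennreal_ofReal)
          (ae_of_all _ fun _ => ENNReal.ofReal_lt_top)]
        simp only [ENNReal.toReal_ofReal (semicircleDensity_nonneg _), smul_eq_mul]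
    _ = ∫ x in -(2 * σ)..2 * σ, semicircleDensity σ x * f x :=
        (intervalIntegral.integral_eq_integral_of_support_subset hsupp).symm
    _ = ∫ θ in (0 : ℝ)..π,
          f (2 * σ * cos θ) * (semicircleDensity σ (2 * σ * cos θ) * (2 * σ * sin θ)) := by
        rw [← hsubst, intervalIntegral.integral_symm, ← intervalIntegral.integral_neg]
        congr 1; ext θ; ring
    _ = 2 / π * ∫ θ in (0 : ℝ)..π, f (2 * σ * cos θ) * sin θ ^ 2 := by
        rw [← intervalIntegral.integral_const_mul]
        refine intervalIntegral.integral_congr fun θ hθ => ?_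
        rw [uIcc_of_le pi_pos.le] at hθ
        simp only [semicircleDensity_two_mul_cos_mul hσ hθ]
        ring

theorem semicircle_ae_mem_Icc (hσ : 0 ≤ σ) : ∀ᵐ x ∂semicircle σ, x ∈ Icc (-(2 * σ)) (2 * σ) := by
  rw [semicircle, ae_withDensity_iff continuous_semicircleDensity.measurable.ennreal_ofReal]
  refine ae_of_all _ fun x hx => ?_
  by_contra hmem
  exact hx (by
    rw [semicircleDensity_eq_zero hσ fun h => hmem ⟨h.1.le, h.2.le⟩, ENNReal.ofReal_zero])

theorem integral_pow_semicircle (hσ : 0 < σ) (k : ℕ) :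
    ∫ x, x ^ k ∂semicircle σ = σ ^ k * halfLinePaths k 0 := by
  have h := eq_pow_mul_halfLinePaths (σ := σ) (c := fun k j =>
    2 / π * ∫ θ in (0 : ℝ)..π, (2 * σ * cos θ) ^ k * sin ((j + 1 : ℕ) * θ) * sin θ)
    (fun j => ?_) (fun k => ?_) (fun k j => ?_) k 0
  · simpa [integral_semicircle hσ (continuous_pow k), sq, mul_assoc] using h
  · simp only [pow_zero, one_mul, integral_sin_succ_mul_mul_sin]
    split_ifs
    · field_simp
    · simp
  · simp only [integral_two_mul_cos_pow_succ_mul_sin_mul_sin, CharP.cast_eq_zero, zero_mul,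
      sin_zero, mul_zero, intervalIntegral.integral_zero, zero_add]
    ring
  · simp only [integral_two_mul_cos_pow_succ_mul_sin_mul_sin]
    ring

theorem isProbabilityMeasure_semicircle (hσ : 0 < σ) : IsProbabilityMeasure (semicircle σ) := by
  have h := integral_pow_semicircle hσ 0
  simp only [pow_zero, integral_const, smul_eq_mul, mul_one, halfLinePaths, Nat.cast_one] at h
  exact ⟨ENNReal.toReal_eq_one_iff _ |>.1 h⟩

end Semicircle

/-- The spectral measure at the root vector `e₀` of the adjacency operator of `ℕ` (rooted at its
first vertex) with all edge weights `σ > 0`, i.e. `C e_k = σ e_{k-1} + σ e_{k+1}`, is the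
semicircle law of variance `σ²`, with density `(2πσ²)⁻¹ √(4σ² - x²)` on `[-2σ, 2σ]`.
The spectral measure `μ` at `e₀` is recorded through its defining moments
`∫ x^k dμ = ⟨e₀, C^k e₀⟩`. -/
theorem spectral_measure_of_half_line_is_semicircle (σ : ℝ) (hσ : 0 < σ)
    (C : lp (fun _ : ℕ => ℂ) 2 →L[ℂ] lp (fun _ : ℕ => ℂ) 2) (hsa : IsSelfAdjoint C)
    (h0 : C (lp.single 2 0 (1 : ℂ)) = (σ : ℂ) • lp.single 2 1 (1 : ℂ))
    (hk : ∀ k : ℕ, C (lp.single 2 (k + 1) (1 : ℂ)) =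
      (σ : ℂ) • lp.single 2 k (1 : ℂ) + (σ : ℂ) • lp.single 2 (k + 2) (1 : ℂ))
    (μ : Measure ℝ) [IsProbabilityMeasure μ]
    (hint : ∀ k : ℕ, Integrable (fun x => x ^ k) μ)
    (hmom : ∀ k : ℕ, ∫ x, x ^ k ∂μ =
      (⟪lp.single 2 0 (1 : ℂ), (C ^ k) (lp.single 2 0 (1 : ℂ))⟫).re) :
    μ = volume.withDensity fun x =>
      ENNReal.ofReal ((2 * Real.pi * σ ^ 2)⁻¹ * Real.sqrt (4 * σ ^ 2 - x ^ 2)) := by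
  have hmoment : ∀ k : ℕ, ∫ x, x ^ k ∂μ = σ ^ k * halfLinePaths k 0 := fun k => by
    rw [hmom, inner_single_pow_apply_single hsa h0 hk]
    norm_cast
  have hμ : ∀ᵐ x ∂μ, x ∈ Icc (-(2 * σ)) (2 * σ) :=
    ae_mem_Icc_of_integral_pow_le (c := 1) (by positivity) (fun n => hint (2 * n))
      fun n => by rw [hmoment, one_mul]; exact pow_mul_halfLinePaths_le hσ.le _ _
  have := isProbabilityMeasure_semicircle hσ
  change μ = semicircle σ
  exact ext_of_integral_pow_eq_of_ae_mem_Icc hμ (semicircle_ae_mem_Icc hσ.le)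
    fun k => by rw [hmoment, integral_pow_semicircle hσ]
end
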